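/- Let β be a braid word on n strands and let ι ≡ −1 be the constant sign assignment on E_β. Then ι is an inversion datum on β (every crossing has pattern (−,−,−,−)), the ground state s₀ ≡ −1 is a valid state, and in ℚ(v,u) one has the exact identity P(s₀) = q^{(n−1+w(β))/2} · x^{−(n−1+w(β))/2}. -/

import Mathlib

/-- A braid word on `n` strands with `m` letters. Strand positions are 0-indexed:
the index `p : Fin n` represents the mathematical position `p+1 ∈ {1,…,n}`.
The `t`-th letter is a crossing of sign `ε t` involving the strand positions
`k t` and `k t + 1` (i.e. mathematical positions `k t + 1` and `k t + 2`). -/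
structure BraidWord (n m : ℕ) where
  k : Fin m → ℕ
  hk : ∀ t, k t + 1 < n
  ε : Fin m → ℤ
  hε : ∀ t, ε t = 1 ∨ ε t = -1

namespace BraidWord

variable {n m : ℕ}

/-- Segments of the closed braid diagram: `(p, t)` is the segment at horizontal
position `p` (0-indexed) and level `t` (mod `m`); the `t`-th letter has its bottom
at level `t` and its top at level `t+1`, and `(p, 0)` is the `p`-th closure segment. -/
abbrev Seg (n m : ℕ) := Fin n × Fin m

/-- Segment adjacent to the `t`-th crossing at the bottom left. -/
def eBL (β : BraidWord n m) (t : Fin m) : Seg n m :=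
  (⟨β.k t, by have := β.hk t; omega⟩, t)

/-- Segment adjacent to the `t`-th crossing at the bottom right. -/
def eBR (β : BraidWord n m) (t : Fin m) : Seg n m :=
  (⟨β.k t + 1, β.hk t⟩, t)

/-- Segment adjacent to the `t`-th crossing at the top left. -/
def eTL [NeZero m] (β : BraidWord n m) (t : Fin m) : Seg n m :=
  (⟨β.k t, by have := β.hk t; omega⟩, t + 1)

/-- Segment adjacent to the `t`-th crossing at the top right. -/
def eTR [NeZero m] (β : BraidWord n m) (t : Fin m) : Seg n m :=
  (⟨β.k t + 1, β.hk t⟩, t + 1)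

/-- The writhe of a braid word: the sum of the signs of its crossings. -/
def writhe (β : BraidWord n m) : ℤ := ∑ t, β.ε t

/-- The allowed sign patterns `(BL, BR, TL, TR)` around a crossing of sign `e`. -/
def allowedQuad (e a b c d : ℤ) : Prop :=
  if e = 1 then
    (a = 1 ∧ b = -1 ∧ c = -1 ∧ d = 1) ∨ (a = -1 ∧ b = 1 ∧ c = 1 ∧ d = -1) ∨
    (a = -1 ∧ b = -1 ∧ c = -1 ∧ d = -1) ∨ (a = -1 ∧ b = 1 ∧ c = -1 ∧ d = 1) ∨
    (a = 1 ∧ b = 1 ∧ c = 1 ∧ d = 1)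
  else
    (a = 1 ∧ b = -1 ∧ c = -1 ∧ d = 1) ∨ (a = -1 ∧ b = 1 ∧ c = 1 ∧ d = -1) ∨
    (a = -1 ∧ b = -1 ∧ c = -1 ∧ d = -1) ∨ (a = 1 ∧ b = -1 ∧ c = 1 ∧ d = -1) ∨
    (a = 1 ∧ b = 1 ∧ c = 1 ∧ d = 1)

/-- An inversion datum on a braid word: a `±1`-assignment to each segment,
constant along strands away from crossings, with allowed patterns at crossings. -/
def IsInvDatum [NeZero m] (β : BraidWord n m) (ι : Seg n m → ℤ) : Prop :=
  (∀ e : Seg n m, ι e = 1 ∨ ι e = -1) ∧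
  (∀ (p : Fin n) (t : Fin m), p.val ≠ β.k t → p.val ≠ β.k t + 1 → ι (p, t) = ι (p, t + 1)) ∧
  (∀ t : Fin m, allowedQuad (β.ε t) (ι (β.eBL t)) (ι (β.eBR t)) (ι (β.eTL t)) (ι (β.eTR t)))

/-- A state on a braid word: an integer assignment to each segment, constant along
strands away from crossings, conserved at each crossing. -/
def IsState [NeZero m] (β : BraidWord n m) (s : Seg n m → ℤ) : Prop :=
  (∀ (p : Fin n) (t : Fin m), p.val ≠ β.k t → p.val ≠ β.k t + 1 → s (p, t) = s (p, t + 1)) ∧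
  (∀ t : Fin m, s (β.eBL t) + s (β.eBR t) = s (β.eTL t) + s (β.eTR t))

/-- The sign of an integer, with the convention that the sign of `0` is `+1`. -/
def isign (a : ℤ) : ℤ := if 0 ≤ a then 1 else -1

/-- A state is valid for an inversion datum `ι` if its signs agree with `ι` and the
inequalities required for the extended `R`-matrix to be nonzero hold at each crossing. -/
def IsValid [NeZero m] (β : BraidWord n m) (ι s : Seg n m → ℤ) : Prop :=
  β.IsState s ∧ (∀ e : Seg n m, isign (s e) = ι e) ∧
  ∀ t : Fin m,
    if β.ε t = 1 then s (β.eTR t) ≤ s (β.eBL t) ∨ (0 ≤ s (β.eTR t) ∧ s (β.eBL t) < 0)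
    else s (β.eTL t) ≤ s (β.eBR t) ∨ (0 ≤ s (β.eTL t) ∧ s (β.eBR t) < 0)

/-- The ground state associated to an inversion datum: `s₀(e) = (ι(e) - 1)/2 ∈ {0, -1}`. -/
def groundState (ι : Seg n m → ℤ) : Seg n m → ℤ := fun e => (ι e - 1) / 2

/-- The (minimal) x-degree of a state:
`d_x(s) = -(n-1)/2 + ∑_t ε_t (s(e_BR(t)) + s(e_TR(t)) + 1)/2`. -/
def xdeg [NeZero m] (β : BraidWord n m) (s : Seg n m → ℤ) : ℚ :=
  -((n : ℚ) - 1) / 2 +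
    ∑ t : Fin m, (β.ε t : ℚ) * (((s (β.eBR t) : ℚ) + (s (β.eTR t) : ℚ) + 1) / 2)

/-- A pair (braid word, inversion datum) is nice if every valid state has nonnegative
x-degree and only finitely many valid states have x-degree below any given bound. -/
def IsNice [NeZero m] (β : BraidWord n m) (ι : Seg n m → ℤ) : Prop :=
  (∀ s, β.IsValid ι s → 0 ≤ β.xdeg s) ∧
  ∀ M : ℝ, {s : Seg n m → ℤ | β.IsValid ι s ∧ ((β.xdeg s : ℚ) : ℝ) ≤ M}.Finite

/-- The invariant `ℓ(β,ι) = -∑_{p=2}^{n} ι(b_p)/2 + ∑_t ε_t (1 + ι(e_BR(t))·ι(e_TR(t)))/4`. -/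
def ell [NeZero m] (β : BraidWord n m) (ι : Seg n m → ℤ) : ℚ :=
  -(∑ p : Fin n, if p.val = 0 then 0 else (ι (p, 0) : ℚ)) / 2 +
    ∑ t : Fin m, (β.ε t : ℚ) * ((1 + (ι (β.eBR t) : ℚ) * (ι (β.eTR t) : ℚ)) / 4)

end BraidWord

open scoped Finset

/-- The field `ℚ(v)((u))` of formal Laurent series in `u = x^{1/2}` with coefficients
in the rational function field `ℚ(v)`, where `v = q^{1/2}`.  The two-variable rational
function field `ℚ(v,u)` embeds into it by Laurent expansion at `x = 0`. -/
noncomputable abbrev Kf : Type := LaurentSeries (RatFunc ℚ)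

/-- The element `v = q^{1/2}` of `Kf`. -/
noncomputable def vv : Kf := HahnSeries.C (RatFunc.X)

/-- The element `u = x^{1/2}` of `Kf`. -/
noncomputable def uu : Kf := HahnSeries.single (1 : ℤ) 1

/-- The quantum integer `[a] = (q^{a/2} - q^{-a/2})/(q^{1/2} - q^{-1/2})`, written in
terms of `w = q^{1/2}` (take `w = v` for `q` and `w = v⁻¹` for `q⁻¹`). -/
noncomputable def qint {K : Type*} [Field K] (w : K) (a : ℤ) : K :=
  (w ^ a - w ^ (-a)) / (w - w⁻¹)

/-- The balanced quantum binomial `qbinom(a, b)_{q} = q^{(a-b)b/2}·[a]⋯[a-b+1]/([b]⋯[1])`,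
written in terms of `w = q^{1/2}`. -/
noncomputable def qbin {K : Type*} [Field K] (w : K) (a : ℤ) (b : ℕ) : K :=
  w ^ ((a - b) * b) * (∏ i ∈ Finset.range b, qint w (a - i)) /
    ∏ i ∈ Finset.range b, qint w ((i : ℤ) + 1)

/-- The q-Pochhammer symbol `(z; Q)_b = (1 - z)(1 - Qz)⋯(1 - Q^{b-1}z)`. -/
noncomputable def pochK {K : Type*} [Field K] (z Q : K) (b : ℕ) : K :=
  ∏ i ∈ Finset.range b, (1 - Q ^ i * z)

/-- The extended `R`-matrix value of a state at the `t`-th crossing, as an element of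
`ℚ(v,u) ⊆ ℚ(v)((u))` (with `q = v²`, `x = u²`), following Park's table. -/
noncomputable def Rmat {n m : ℕ} [NeZero m] (β : BraidWord n m)
    (s : BraidWord.Seg n m → ℤ) (t : Fin m) : Kf :=
  let i := s (β.eBL t); let j := s (β.eBR t)
  let i' := s (β.eTL t); let j' := s (β.eTR t)
  if β.ε t = 1 then
    if j' ≤ i then
      vv ^ (2 * j * j') * (vv * uu) ^ (j + j' + 1) * qbin vv i (i - j').toNat *
        pochK (vv ^ (2 * (j + 1)) * uu ^ (2 : ℤ)) (vv ^ (2 : ℤ)) (i - j').toNat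
    else if 0 ≤ j' ∧ i < 0 then
      vv ^ (2 * j * j') * (vv * uu) ^ (j + j' + 1) * qbin vv i j'.toNat *
        (pochK (vv ^ (2 * j) * uu ^ (2 : ℤ)) (vv ^ (-2 : ℤ)) (j' - i).toNat)⁻¹
    else 0
  else
    if i' ≤ j then
      vv ^ (-(2 * i * i')) * (vv * uu) ^ (-(i + i' + 1)) * qbin vv⁻¹ j (j - i').toNat *
        pochK (vv ^ (2 * (-i - 1)) * uu ^ (-2 : ℤ)) (vv ^ (-2 : ℤ)) (j - i').toNat
    else if 0 ≤ i' ∧ j < 0 then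
      vv ^ (-(2 * i * i')) * (vv * uu) ^ (-(i + i' + 1)) * qbin vv⁻¹ j i'.toNat *
        (pochK (vv ^ (-(2 * i)) * uu ^ (-2 : ℤ)) (vv ^ (2 : ℤ)) (i' - j).toNat)⁻¹
    else 0

/-- The state sum contribution
`P(s) = (∏_{p=2}^{n} x^{-1/2} q^{-1/2 - s(b_p)}) · ∏_t R_t(s)` of a state `s`. -/
noncomputable def Pval {n m : ℕ} [NeZero m] (β : BraidWord n m)
    (s : BraidWord.Seg n m → ℤ) : Kf :=
  (∏ p : Fin n, if p.val = 0 then 1 else uu⁻¹ * vv ^ (-1 - 2 * s (p, 0))) *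
    ∏ t : Fin m, Rmat β s t

lemma zpow_sum₀ {ι G₀ : Type*} [CommGroupWithZero G₀] {a : G₀} (ha : a ≠ 0)
    (s : Finset ι) (f : ι → ℤ) : a ^ (∑ i ∈ s, f i) = ∏ i ∈ s, a ^ f i := by
  induction s using Finset.cons_induction with
  | empty => simp
  | cons i s _ ih => rw [Finset.sum_cons, Finset.prod_cons, zpow_add₀ ha, ih]

lemma Fin.prod_ite_val_eq_zero {M : Type*} [CommMonoid M] (n : ℕ) (a : M) :
    ∏ p : Fin n, (if p.val = 0 then 1 else a) = a ^ (n - 1) := by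
  cases n with
  | zero => simp
  | succ n => simp [Fin.prod_univ_succ]

namespace BraidWord

variable {n m : ℕ}

lemma groundState_const_neg_one :
    groundState (n := n) (m := m) (fun _ => -1) = fun _ => -1 := by
  funext e
  simp [groundState]

lemma two_le [NeZero m] (β : BraidWord n m) : 2 ≤ n := by
  have := β.hk 0
  omega

variable [NeZero m] (β : BraidWord n m)

lemma isInvDatum_const_neg_one : β.IsInvDatum (fun _ => -1) := by
  refine ⟨fun _ => Or.inr rfl, fun _ _ _ _ => rfl, fun t => ?_⟩
  rcases β.hε t with h | h <;> simp [allowedQuad, h]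

lemma isValid_const_neg_one : β.IsValid (fun _ => -1) (fun _ => -1) :=
  ⟨⟨fun _ _ _ _ => rfl, fun _ => rfl⟩, fun _ => rfl, fun _ => by split_ifs <;> simp⟩

end BraidWord

@[simp] lemma qbin_zero {K : Type*} [Field K] (w : K) (a : ℤ) : qbin w a 0 = 1 := by
  simp [qbin]

@[simp] lemma pochK_zero {K : Type*} [Field K] (z Q : K) : pochK z Q 0 = 1 := by
  simp [pochK]

lemma vv_ne_zero : vv ≠ 0 := by
  simpa [vv] using HahnSeries.C_ne_zero (Γ := ℤ) (RatFunc.X_ne_zero (K := ℚ))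

lemma uu_ne_zero : uu ≠ 0 := by
  simp [uu]

/-- At `s ≡ -1` every crossing falls in the first case of its table with `i - j' = 0`
(resp. `j - i' = 0`), so the binomial and Pochhammer factors are empty. -/
lemma Rmat_const_neg_one {n m : ℕ} [NeZero m] (β : BraidWord n m) (t : Fin m) :
    Rmat β (fun _ => -1) t = (vv * uu⁻¹) ^ β.ε t := by
  have := vv_ne_zero
  rcases β.hε t with h | h <;>
  · simp only [Rmat, h, if_true, le_refl]
    norm_num
    field_simp

/-- For the constant inversion datum `ι ≡ -1`, every crossing has
pattern `(-,-,-,-)`, the ground state `s₀ ≡ -1` is valid, and in `ℚ(v,u)` one has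
exactly `P(s₀) = q^{(n-1+w(β))/2} · x^{-(n-1+w(β))/2}`, i.e.
`P(s₀) = v^{n-1+w(β)} · u^{-(n-1+w(β))}`. -/
theorem constant_inversion_datum_Pval (n m : ℕ) [NeZero m] (β : BraidWord n m) :
    β.IsInvDatum (fun _ => -1) ∧
    β.IsValid (fun _ => -1) (BraidWord.groundState (fun _ => -1)) ∧
    Pval β (BraidWord.groundState (fun _ => -1)) =
      vv ^ ((n : ℤ) - 1 + β.writhe) * uu ^ (-((n : ℤ) - 1 + β.writhe)) := by
  rw [BraidWord.groundState_const_neg_one]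
  refine ⟨β.isInvDatum_const_neg_one, β.isValid_const_neg_one, ?_⟩
  have hz : vv * uu⁻¹ ≠ 0 := mul_ne_zero vv_ne_zero (inv_ne_zero uu_ne_zero)
  have hn : ((n - 1 : ℕ) : ℤ) = n - 1 := by have := β.two_le; omega
  calc Pval β (fun _ => -1)
      = (vv * uu⁻¹) ^ ((n - 1 : ℕ) : ℤ) * ∏ t, (vv * uu⁻¹) ^ β.ε t := by
        simp only [Pval, Rmat_const_neg_one]
        norm_num [Fin.prod_ite_val_eq_zero, mul_comm]
    _ = (vv * uu⁻¹) ^ ((n : ℤ) - 1 + β.writhe) := by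
        rw [BraidWord.writhe, zpow_add₀ hz, zpow_sum₀ hz, hn]
    _ = vv ^ ((n : ℤ) - 1 + β.writhe) * uu ^ (-((n : ℤ) - 1 + β.writhe)) := by
        rw [mul_zpow, inv_zpow, zpow_neg]
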